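/- For every n ≥ 0 (with the convention P_{−1}^(1) := 0 and the term ζ·r_0·P_{−1}^(1) interpreted as 0), the following two identities hold identically in x: (i) d/dx P_{n+1}^(0)(x;ζ) = ((n+1)/p̃_n)·P_n^(1)(x;ζ) + ζ·r_n·P_{n−1}^(1)(x;ζ); and (ii) (x²−1)·d/dx P_n^(1)(x;ζ) + x·P_n^(1)(x;ζ) = (n+1)·p̃_n·P_{n+1}^(0)(x;ζ) + ζ·p_n·P_n^(0)(x;ζ). -/

import Mathlib

open MeasureTheory Polynomial

noncomputable def besselK (n : ℕ) (ζ : ℝ) : ℝ :=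
  ∫ t in Set.Ioi (0 : ℝ), Real.cosh ((n : ℝ) * t) * Real.exp (-ζ * Real.cosh t)

noncomputable def Gfun (ζ : ℝ) : ℝ := besselK 2 ζ / besselK 1 ζ

noncomputable def wgt (ℓ : ℕ) (ζ x : ℝ) : ℝ :=
  (x ^ 2 - 1) ^ ((ℓ : ℝ) - 1 / 2) * Real.exp (-ζ * x) / besselK 1 ζ

/-!
Since `ω⁽¹⁾ = (x² - 1) ω⁽⁰⁾` and `p ω⁽¹⁾` vanishes at both ends of `(1, ∞)`, integrating its
derivative gives `∫ ((x² - 1) p' + x p) ω⁽⁰⁾ = ζ ∫ (x² - 1) p ω⁽⁰⁾` for every polynomial `p`.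
Applied to products of basis polynomials, this moves the derivative from one family to the other:
the coefficient of `P_k⁽¹⁾` in `P_{n+1}⁽⁰⁾'` (and of `P_k⁽⁰⁾` in `(x² - 1) P_n⁽¹⁾' + x P_n⁽¹⁾`) becomes
the pairing of a basis polynomial with a polynomial of lower or equal degree. Orthonormality alone
evaluates such a pairing as a ratio of a coefficient to a leading coefficient, which vanishes
except for the top two indices.
-/

open Set Filter Real

namespace Polynomial

variable {K : Type*} [Field K]

structure IsOrthonormalSeq (Φ : K[X] →ₗ[K] K) (P : ℕ → K[X]) : Prop where
  natDegree_eq : ∀ n, (P n).natDegree = n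
  apply_mul_eq : ∀ m n, Φ (P m * P n) = if m = n then 1 else 0

namespace IsOrthonormalSeq

variable {Φ : K[X] →ₗ[K] K} {P : ℕ → K[X]}

lemma ne_zero (hP : IsOrthonormalSeq Φ P) (n : ℕ) : P n ≠ 0 := by
  intro h
  simpa [h] using hP.apply_mul_eq n n

lemma coeff_self (hP : IsOrthonormalSeq Φ P) (n : ℕ) : (P n).coeff n = (P n).leadingCoeff := by
  rw [leadingCoeff, hP.natDegree_eq]

def toSequence (hP : IsOrthonormalSeq Φ P) : Sequence K where
  elems' := P
  degree_eq' n := by rw [degree_eq_natDegree (hP.ne_zero n), hP.natDegree_eq]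

lemma apply_mul_eq_zero_of_degree_lt (hP : IsOrthonormalSeq Φ P) {m : ℕ} {q : K[X]}
    (hq : q.degree < m) : Φ (P m * q) = 0 := by
  have hspan : q ∈ Submodule.span K (P '' Iio m) := by
    rw [show P = hP.toSequence from rfl,
      hP.toSequence.span_degreeLT fun i _ => (leadingCoeff_ne_zero.2 (hP.ne_zero i)).isUnit]
    exact mem_degreeLT.2 hq
  clear hq
  induction hspan using Submodule.span_induction with
  | mem p hp =>
    obtain ⟨k, hk, rfl⟩ := hp
    rw [hP.apply_mul_eq, if_neg (ne_of_gt hk)]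
  | zero => rw [mul_zero, map_zero]
  | add p q _ _ hp hq => rw [mul_add, map_add, hp, hq, add_zero]
  | smul a p _ hp => rw [mul_smul_comm, map_smul, hp, smul_zero]

lemma apply_mul_eq_zero_of_natDegree_lt (hP : IsOrthonormalSeq Φ P) {m : ℕ} {q : K[X]}
    (hq : q.natDegree < m) : Φ (P m * q) = 0 :=
  hP.apply_mul_eq_zero_of_degree_lt (degree_le_natDegree.trans_lt (Nat.cast_lt.2 hq))

lemma natDegree_derivative_le (hP : IsOrthonormalSeq Φ P) (n : ℕ) :
    (derivative (P (n + 1))).natDegree ≤ n := by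
  simpa [hP.natDegree_eq] using Polynomial.natDegree_derivative_le (P (n + 1))

lemma apply_mul_eq_coeff_div (hP : IsOrthonormalSeq Φ P) {m : ℕ} {q : K[X]}
    (hq : q.natDegree ≤ m) : Φ (P m * q) = q.coeff m / (P m).leadingCoeff := by
  have hlt : (q - C (q.coeff m / (P m).leadingCoeff) * P m).degree < m := by
    rw [degree_lt_iff_coeff_zero]
    intro k hk
    rcases (Nat.cast_le.1 hk).eq_or_lt with rfl | hlt
    · rw [coeff_sub, coeff_C_mul, hP.coeff_self,
        div_mul_cancel₀ _ (leadingCoeff_ne_zero.2 (hP.ne_zero m)), sub_self]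
    · rw [coeff_sub, coeff_C_mul, coeff_eq_zero_of_natDegree_lt (hq.trans_lt hlt),
        coeff_eq_zero_of_natDegree_lt (p := P m) (by rwa [hP.natDegree_eq]), mul_zero, sub_zero]
  have := hP.apply_mul_eq_zero_of_degree_lt hlt
  rwa [mul_sub, map_sub, mul_left_comm, ← smul_eq_C_mul, map_smul, hP.apply_mul_eq, if_pos rfl,
    smul_eq_mul, mul_one, sub_eq_zero] at this

lemma eq_zero_of_forall_apply_mul_eq_zero (hP : IsOrthonormalSeq Φ P) {N : ℕ} {q : K[X]}
    (hq : q.natDegree ≤ N) (h : ∀ k ≤ N, Φ (P k * q) = 0) : q = 0 := by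
  by_contra hq0
  have := h _ hq
  rw [hP.apply_mul_eq_coeff_div le_rfl, coeff_natDegree] at this
  exact div_ne_zero (leadingCoeff_ne_zero.2 hq0) (leadingCoeff_ne_zero.2 (hP.ne_zero _)) this

lemma eq_C_mul_add_C_mul (hP : IsOrthonormalSeq Φ P) {n : ℕ} {q : K[X]}
    (hq : q.natDegree ≤ n + 1) (hlow : ∀ k < n, Φ (P k * q) = 0) :
    q = C (Φ (P (n + 1) * q)) * P (n + 1) + C (Φ (P n * q)) * P n := by
  rw [← sub_eq_zero]
  refine hP.eq_zero_of_forall_apply_mul_eq_zero (N := n + 1) ?_ fun k hk => ?_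
  · refine (natDegree_sub_le _ _).trans (max_le hq ((natDegree_add_le _ _).trans (max_le ?_ ?_)))
      <;> refine (natDegree_C_mul_le _ _).trans ?_ <;> rw [hP.natDegree_eq]
    omega
  · simp only [mul_sub, mul_add, ← smul_eq_C_mul, mul_smul_comm, map_sub, map_add, map_smul,
      hP.apply_mul_eq, smul_eq_mul]
    rcases hk.eq_or_lt with rfl | hk
    · simp
    rcases (Nat.lt_succ_iff.1 hk).eq_or_lt with rfl | hk
    · simp
    · simp [hlow k hk, hk.ne, (hk.trans n.lt_succ_self).ne]

end IsOrthonormalSeq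

lemma coeff_X_sq_sub_one_mul (p : K[X]) (n : ℕ) :
    ((X ^ 2 - 1) * p).coeff (n + 2) = p.coeff n - p.coeff (n + 2) := by
  rw [sub_mul, one_mul, coeff_sub, coeff_X_pow_mul]

lemma natDegree_X_sq_sub_one_mul_le {p : K[X]} {n : ℕ} (hp : p.natDegree ≤ n) :
    ((X ^ 2 - 1) * p).natDegree ≤ n + 2 := by
  compute_degree
  omega

lemma natDegree_X_sq_sub_one_mul_derivative_add_le {p : K[X]} {n : ℕ} (hp : p.natDegree ≤ n) :
    ((X ^ 2 - 1) * derivative p + X * p).natDegree ≤ n + 1 := by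
  rcases eq_or_ne p.natDegree 0 with h0 | h0
  · rw [derivative_of_natDegree_zero h0, mul_zero, zero_add]
    compute_degree
    omega
  · have := natDegree_derivative_lt h0
    compute_degree
    omega

lemma coeff_X_sq_sub_one_mul_derivative_add {p : K[X]} {n : ℕ} (hp : p.natDegree ≤ n) :
    ((X ^ 2 - 1) * derivative p + X * p).coeff (n + 1) = (n + 1) * p.coeff n := by
  have hX : (X * derivative p).coeff n = n * p.coeff n := by
    cases n with
    | zero => simp
    | succ m => rw [coeff_X_mul, coeff_derivative]; push_cast; ring
  rw [sub_mul, one_mul, pow_two, mul_assoc, coeff_add, coeff_sub, coeff_X_mul, coeff_X_mul, hX,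
    coeff_derivative, coeff_eq_zero_of_natDegree_lt (by omega : p.natDegree < n + 1 + 1)]
  ring

section StructureRelations

variable {Φ₀ Φ₁ : K[X] →ₗ[K] K} {P₀ P₁ : ℕ → K[X]} {ζ : K}

lemma apply_derivative_mul (hΦ : ∀ p, Φ₁ p = Φ₀ ((X ^ 2 - 1) * p))
    (hparts : ∀ p, Φ₀ ((X ^ 2 - 1) * derivative p + X * p) = ζ * Φ₀ ((X ^ 2 - 1) * p))
    (f g : K[X]) :
    Φ₁ (derivative f * g) = ζ * Φ₁ (f * g) - Φ₀ (f * ((X ^ 2 - 1) * derivative g + X * g)) := by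
  rw [hΦ, hΦ, eq_sub_iff_add_eq, ← map_add, ← hparts, derivative_mul]
  congr 1
  ring

lemma apply_mul_derivative_succ (h₀ : IsOrthonormalSeq Φ₀ P₀) (h₁ : IsOrthonormalSeq Φ₁ P₁)
    (n : ℕ) :
    Φ₁ (P₁ n * derivative (P₀ (n + 1))) =
      (n + 1) * (P₀ (n + 1)).leadingCoeff / (P₁ n).leadingCoeff := by
  rw [h₁.apply_mul_eq_coeff_div (h₀.natDegree_derivative_le n), coeff_derivative, h₀.coeff_self]
  ring

lemma apply_mul_derivative_add_two (h₀ : IsOrthonormalSeq Φ₀ P₀) (h₁ : IsOrthonormalSeq Φ₁ P₁)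
    (hΦ : ∀ p, Φ₁ p = Φ₀ ((X ^ 2 - 1) * p))
    (hparts : ∀ p, Φ₀ ((X ^ 2 - 1) * derivative p + X * p) = ζ * Φ₀ ((X ^ 2 - 1) * p))
    {k n : ℕ} (hk : k ≤ n) :
    Φ₁ (P₁ k * derivative (P₀ (n + 2))) = ζ * (P₁ k).coeff n / (P₀ (n + 2)).leadingCoeff := by
  have hdeg : (P₁ k).natDegree ≤ k := (h₁.natDegree_eq k).le
  rw [mul_comm, apply_derivative_mul hΦ hparts, hΦ, mul_left_comm (X ^ 2 - 1 : K[X]),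
    h₀.apply_mul_eq_coeff_div (natDegree_X_sq_sub_one_mul_le (hdeg.trans hk)),
    h₀.apply_mul_eq_zero_of_natDegree_lt
      ((natDegree_X_sq_sub_one_mul_derivative_add_le hdeg).trans_lt (by omega)),
    coeff_X_sq_sub_one_mul, coeff_eq_zero_of_natDegree_lt (p := P₁ k) (n := n + 2) (by omega)]
  ring

lemma apply_mul_X_sq_sub_one_mul_derivative_add (h₀ : IsOrthonormalSeq Φ₀ P₀)
    (h₁ : IsOrthonormalSeq Φ₁ P₁) (hΦ : ∀ p, Φ₁ p = Φ₀ ((X ^ 2 - 1) * p))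
    (hparts : ∀ p, Φ₀ ((X ^ 2 - 1) * derivative p + X * p) = ζ * Φ₀ ((X ^ 2 - 1) * p))
    {k n : ℕ} (hk : k ≤ n) :
    Φ₀ (P₀ k * ((X ^ 2 - 1) * derivative (P₁ n) + X * P₁ n)) =
      ζ * (P₀ k).coeff n / (P₁ n).leadingCoeff := by
  have hdeg : (derivative (P₀ k)).degree < n := by
    refine (degree_derivative_lt (h₀.ne_zero k)).trans_le ?_
    rw [degree_eq_natDegree (h₀.ne_zero k), h₀.natDegree_eq]
    exact Nat.cast_le.2 hk
  have := apply_derivative_mul hΦ hparts (P₀ k) (P₁ n)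
  rw [mul_comm (derivative _), h₁.apply_mul_eq_zero_of_degree_lt hdeg, mul_comm (P₀ k),
    h₁.apply_mul_eq_coeff_div ((h₀.natDegree_eq k).trans_le hk)] at this
  linear_combination this

theorem derivative_one_eq (h₀ : IsOrthonormalSeq Φ₀ P₀) (h₁ : IsOrthonormalSeq Φ₁ P₁) :
    derivative (P₀ 1) = C ((P₀ 1).leadingCoeff / (P₁ 0).leadingCoeff) * P₁ 0 := by
  have hdeg := h₀.natDegree_derivative_le 0
  refine (h₁.eq_C_mul_add_C_mul (n := 0) (hdeg.trans zero_le_one) fun k hk => absurd hk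
    k.not_lt_zero).trans ?_
  rw [zero_add, h₁.apply_mul_eq_zero_of_natDegree_lt (hdeg.trans_lt one_pos),
    apply_mul_derivative_succ h₀ h₁]
  simp

theorem derivative_add_two_eq (h₀ : IsOrthonormalSeq Φ₀ P₀) (h₁ : IsOrthonormalSeq Φ₁ P₁)
    (hΦ : ∀ p, Φ₁ p = Φ₀ ((X ^ 2 - 1) * p))
    (hparts : ∀ p, Φ₀ ((X ^ 2 - 1) * derivative p + X * p) = ζ * Φ₀ ((X ^ 2 - 1) * p)) (n : ℕ) :
    derivative (P₀ (n + 2)) =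
      C ((n + 2) * (P₀ (n + 2)).leadingCoeff / (P₁ (n + 1)).leadingCoeff) * P₁ (n + 1) +
        C (ζ * (P₁ n).leadingCoeff / (P₀ (n + 2)).leadingCoeff) * P₁ n := by
  refine (h₁.eq_C_mul_add_C_mul (h₀.natDegree_derivative_le (n + 1)) fun k hk => ?_).trans ?_
  · rw [apply_mul_derivative_add_two h₀ h₁ hΦ hparts hk.le,
      coeff_eq_zero_of_natDegree_lt (by rwa [h₁.natDegree_eq]), mul_zero, zero_div]
  · rw [apply_mul_derivative_succ h₀ h₁, apply_mul_derivative_add_two h₀ h₁ hΦ hparts le_rfl,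
      h₁.coeff_self]
    push_cast
    ring_nf

theorem X_sq_sub_one_mul_derivative_add_X_mul_eq (h₀ : IsOrthonormalSeq Φ₀ P₀)
    (h₁ : IsOrthonormalSeq Φ₁ P₁) (hΦ : ∀ p, Φ₁ p = Φ₀ ((X ^ 2 - 1) * p))
    (hparts : ∀ p, Φ₀ ((X ^ 2 - 1) * derivative p + X * p) = ζ * Φ₀ ((X ^ 2 - 1) * p)) (n : ℕ) :
    (X ^ 2 - 1) * derivative (P₁ n) + X * P₁ n =
      C ((n + 1) * (P₁ n).leadingCoeff / (P₀ (n + 1)).leadingCoeff) * P₀ (n + 1) +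
        C (ζ * (P₀ n).leadingCoeff / (P₁ n).leadingCoeff) * P₀ n := by
  have hdeg : (P₁ n).natDegree ≤ n := (h₁.natDegree_eq n).le
  refine (h₀.eq_C_mul_add_C_mul (natDegree_X_sq_sub_one_mul_derivative_add_le hdeg)
    fun k hk => ?_).trans ?_
  · rw [apply_mul_X_sq_sub_one_mul_derivative_add h₀ h₁ hΦ hparts hk.le,
      coeff_eq_zero_of_natDegree_lt (by rwa [h₀.natDegree_eq]), mul_zero, zero_div]
  · rw [apply_mul_X_sq_sub_one_mul_derivative_add h₀ h₁ hΦ hparts le_rfl, h₀.coeff_self,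
      h₀.apply_mul_eq_coeff_div (natDegree_X_sq_sub_one_mul_derivative_add_le hdeg),
      coeff_X_sq_sub_one_mul_derivative_add hdeg, h₁.coeff_self]

end StructureRelations

end Polynomial

lemma integrableOn_eval_mul_exp_neg {ζ : ℝ} (hζ : 0 < ζ) (p : ℝ[X]) (a : ℝ) :
    IntegrableOn (fun x => p.eval x * exp (-ζ * x)) (Ioi a) := by
  refine integrable_of_isBigO_exp_neg (half_pos hζ) (by fun_prop) ?_
  have hp : (fun x => p.eval x) =O[atTop] fun x => x ^ p.natDegree := by
    simpa using isBigO_atTop_of_degree_le p (X ^ p.natDegree) (by simp [degree_le_natDegree])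
  refine ((hp.trans (isLittleO_pow_exp_pos_mul_atTop _ (half_pos hζ)).isBigO).mul
    (Asymptotics.isBigO_refl (fun x => exp (-ζ * x)) atTop)).congr_right fun x => ?_
  rw [← exp_add]
  ring_nf

lemma integrableOn_eval_mul_rpow_mul_exp_neg {ζ s : ℝ} (hζ : 0 < ζ) (hs : -1 < s) (p : ℝ[X]) :
    IntegrableOn (fun x => p.eval x * ((x ^ 2 - 1) ^ s * exp (-ζ * x))) (Ioi 1) := by
  have hsplit : Ioi (1 : ℝ) ⊆ Icc 1 2 ∪ Ioi 2 := fun x hx =>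
    (le_or_gt x 2).imp (fun h => ⟨hx.out.le, h⟩) id
  refine IntegrableOn.mono_set (IntegrableOn.union ?_ ?_) hsplit
  · -- near `1` the integrand is `(x - 1) ^ s` times a continuous function
    have hsing : IntegrableOn (fun x : ℝ => (x - 1) ^ s) (Icc 1 2) := by
      have := (intervalIntegral.intervalIntegrable_rpow' (a := 0) (b := 1) hs).comp_sub_right 1
      rw [intervalIntegrable_iff_integrableOn_Icc_of_le (by norm_num)] at this
      norm_num at this
      exact this
    have hcont : ContinuousOn (fun x : ℝ => p.eval x * (x + 1) ^ s * exp (-ζ * x)) (Icc 1 2) := by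
      refine ContinuousOn.mul (ContinuousOn.mul (by fun_prop) ?_) (by fun_prop)
      exact ContinuousOn.rpow_const (by fun_prop) fun x hx => Or.inl (by linarith [hx.1])
    refine (hsing.mul_continuousOn hcont isCompact_Icc).congr_fun (fun x hx => ?_) measurableSet_Icc
    have h1 : (0 : ℝ) ≤ x - 1 := by linarith [hx.1]
    rw [show x ^ 2 - 1 = (x - 1) * (x + 1) by ring, mul_rpow h1 (by linarith)]
    ring
  · have hmeas : AEStronglyMeasurable (fun x : ℝ => p.eval x * ((x ^ 2 - 1) ^ s * exp (-ζ * x)))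
        (volume.restrict (Ioi 2)) := by
      refine ContinuousOn.aestronglyMeasurable ?_ measurableSet_Ioi
      refine ContinuousOn.mul (by fun_prop) (ContinuousOn.mul ?_ (by fun_prop))
      exact ContinuousOn.rpow_const (by fun_prop) fun x hx => Or.inl (by nlinarith [mem_Ioi.1 hx])
    refine (integrableOn_eval_mul_exp_neg hζ (p * (X ^ 2 - 1) ^ ⌈s⌉₊) 2).norm.mono' hmeas ?_
    rw [ae_restrict_iff' measurableSet_Ioi]
    refine ae_of_all _ fun x (hx : 2 < x) => ?_
    have hbase : 1 ≤ x ^ 2 - 1 := by nlinarith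
    -- on `x > 2` the base is `≥ 1`, so the power is dominated by a polynomial
    have hpow : (x ^ 2 - 1) ^ s ≤ (x ^ 2 - 1) ^ ⌈s⌉₊ := by
      simpa only [rpow_natCast] using rpow_le_rpow_of_exponent_le hbase (Nat.le_ceil s)
    simp only [eval_mul, eval_pow, eval_sub, eval_X, eval_one, norm_mul, norm_eq_abs,
      abs_of_nonneg (rpow_nonneg (zero_le_one.trans hbase) s), abs_of_pos (exp_pos _),
      abs_of_nonneg (pow_nonneg (zero_le_one.trans hbase) _), mul_assoc]
    gcongr

lemma integrableOn_eval_mul_wgt {ζ : ℝ} (hζ : 0 < ζ) (ℓ : ℕ) (p : ℝ[X]) :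
    IntegrableOn (fun x => p.eval x * wgt ℓ ζ x) (Ioi 1) := by
  have hs : (-1 : ℝ) < ℓ - 1 / 2 := by linarith [(Nat.cast_nonneg ℓ : (0 : ℝ) ≤ ℓ)]
  simpa only [IntegrableOn, wgt, mul_div_assoc] using
    (integrableOn_eval_mul_rpow_mul_exp_neg hζ hs p).div_const (besselK 1 ζ)

lemma rpow_half_eq_mul_rpow_neg_half {a : ℝ} (ha : 0 < a) :
    a ^ (1 / 2 : ℝ) = a * a ^ (-(1 / 2) : ℝ) := by
  rw [← rpow_one_add' ha.le (by norm_num)]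
  norm_num

lemma wgt_one_eq (ζ : ℝ) {x : ℝ} (hx : 1 < x) : wgt 1 ζ x = (x ^ 2 - 1) * wgt 0 ζ x := by
  simp only [wgt, Nat.cast_one, Nat.cast_zero, zero_sub]
  rw [show (1 : ℝ) - 1 / 2 = 1 / 2 by norm_num, rpow_half_eq_mul_rpow_neg_half (by nlinarith)]
  ring

lemma hasDerivAt_wgt_one (ζ : ℝ) {x : ℝ} (hx : 1 < x) :
    HasDerivAt (wgt 1 ζ) ((x - ζ * (x ^ 2 - 1)) * wgt 0 ζ x) x := by
  have ha : 0 < x ^ 2 - 1 := by nlinarith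
  have h := ((((hasDerivAt_pow 2 x).sub_const 1).rpow_const (p := 1 / 2) (Or.inl ha.ne')).mul
    ((hasDerivAt_id x).const_mul (-ζ)).exp).div_const (besselK 1 ζ)
  have hw : wgt 1 ζ = fun y => (y ^ 2 - 1) ^ (1 / 2 : ℝ) * exp (-ζ * y) / besselK 1 ζ := by
    ext y
    norm_num [wgt]
  rw [hw]
  refine h.congr_deriv ?_
  simp only [wgt, id, Nat.cast_zero, zero_sub, Nat.cast_ofNat]
  rw [rpow_half_eq_mul_rpow_neg_half ha, show (1 / 2 : ℝ) - 1 = -(1 / 2) by norm_num]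
  ring

lemma continuous_wgt_one (ζ : ℝ) : Continuous (wgt 1 ζ) := by
  unfold wgt
  refine Continuous.div_const (Continuous.mul ?_ (by fun_prop)) _
  exact (by fun_prop : Continuous fun x : ℝ => x ^ 2 - 1).rpow_const fun _ => Or.inr (by norm_num)

noncomputable def wgtIntegral {ζ : ℝ} (hζ : 0 < ζ) (ℓ : ℕ) : ℝ[X] →ₗ[ℝ] ℝ where
  toFun p := ∫ x in Ioi 1, p.eval x * wgt ℓ ζ x
  map_add' p q := by
    simp only [eval_add, add_mul]
    exact integral_add (integrableOn_eval_mul_wgt hζ ℓ p) (integrableOn_eval_mul_wgt hζ ℓ q)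
  map_smul' c p := by
    simp only [eval_smul, smul_eq_mul, mul_assoc, integral_const_mul, RingHom.id_apply]

lemma wgtIntegral_apply {ζ : ℝ} (hζ : 0 < ζ) (ℓ : ℕ) (p : ℝ[X]) :
    wgtIntegral hζ ℓ p = ∫ x in Ioi 1, p.eval x * wgt ℓ ζ x :=
  rfl

lemma wgtIntegral_one {ζ : ℝ} (hζ : 0 < ζ) (p : ℝ[X]) :
    wgtIntegral hζ 1 p = wgtIntegral hζ 0 ((X ^ 2 - 1) * p) := by
  refine setIntegral_congr_fun measurableSet_Ioi fun x hx => ?_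
  simp only [eval_mul, eval_sub, eval_pow, eval_X, eval_one, wgt_one_eq ζ hx]
  ring

lemma wgtIntegral_zero_X_sq_sub_one_mul_derivative_add {ζ : ℝ} (hζ : 0 < ζ) (p : ℝ[X]) :
    wgtIntegral hζ 0 ((X ^ 2 - 1) * derivative p + X * p) =
      ζ * wgtIntegral hζ 0 ((X ^ 2 - 1) * p) := by
  set q := (X ^ 2 - 1) * derivative p + X * p - C ζ * ((X ^ 2 - 1) * p)
  have hderiv : ∀ x ∈ Ioi (1 : ℝ),
      HasDerivAt (fun y => p.eval y * wgt 1 ζ y) (q.eval x * wgt 0 ζ x) x := by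
    intro x hx
    refine ((p.hasDerivAt x).mul (hasDerivAt_wgt_one ζ hx)).congr_deriv ?_
    simp only [q, eval_sub, eval_add, eval_mul, eval_pow, eval_X, eval_one, eval_C,
      wgt_one_eq ζ hx]
    ring
  have hq := integrableOn_eval_mul_wgt hζ 0 q
  have h := integral_Ioi_of_hasDerivAt_of_tendsto
    (p.continuous.mul (continuous_wgt_one ζ)).continuousWithinAt hderiv hq
    (tendsto_zero_of_hasDerivAt_of_integrableOn_Ioi hderiv hq (integrableOn_eval_mul_wgt hζ 1 p))
  have h1 : wgt 1 ζ 1 = 0 := by norm_num [wgt]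
  rw [← wgtIntegral_apply hζ, map_sub, ← smul_eq_C_mul, map_smul, smul_eq_mul, Pi.mul_apply, h1,
    mul_zero, sub_zero, sub_eq_zero] at h
  exact h

theorem stmt10_general
    (ζ : ℝ) (hζ : 0 < ζ)
    (P0 P1 : ℕ → Polynomial ℝ) (lc0 lc1 : ℕ → ℝ)
    (hdeg0 : ∀ n, (P0 n).natDegree = n)
    (hdeg1 : ∀ n, (P1 n).natDegree = n)
    (hlc0 : ∀ n, (P0 n).leadingCoeff = lc0 n)
    (hlc1 : ∀ n, (P1 n).leadingCoeff = lc1 n)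
    (horth0 : ∀ m n, (∫ x in Set.Ioi (1 : ℝ),
        (P0 m).eval x * (P0 n).eval x * wgt 0 ζ x) = if m = n then (1 : ℝ) else 0)
    (horth1 : ∀ m n, (∫ x in Set.Ioi (1 : ℝ),
        (P1 m).eval x * (P1 n).eval x * wgt 1 ζ x) = if m = n then (1 : ℝ) else 0)
    (p r pt : ℕ → ℝ)
    (hp : ∀ n, p n = lc0 n / lc1 n)
    (hr : ∀ n, r (n + 1) = lc1 n / lc0 (n + 2))
    (hpt : ∀ n, pt n = lc1 n / lc0 (n + 1)) :
    (derivative (P0 1) = C (1 / pt 0) * P1 0) ∧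
    (∀ n, derivative (P0 (n + 2)) =
      C (((n : ℝ) + 2) / pt (n + 1)) * P1 (n + 1) + C (ζ * r (n + 1)) * P1 n) ∧
    (∀ n, (X ^ 2 - 1) * derivative (P1 n) + X * P1 n =
      C (((n : ℝ) + 1) * pt n) * P0 (n + 1) + C (ζ * p n) * P0 n) := by
  have h₀ : IsOrthonormalSeq (wgtIntegral hζ 0) P0 :=
    ⟨hdeg0, fun m n => by simpa only [wgtIntegral_apply, eval_mul] using horth0 m n⟩
  have h₁ : IsOrthonormalSeq (wgtIntegral hζ 1) P1 :=
    ⟨hdeg1, fun m n => by simpa only [wgtIntegral_apply, eval_mul] using horth1 m n⟩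
  have hΦ := wgtIntegral_one hζ
  have hparts := wgtIntegral_zero_X_sq_sub_one_mul_derivative_add hζ
  refine ⟨?_, fun n => ?_, fun n => ?_⟩
  · rw [derivative_one_eq h₀ h₁, hpt, hlc0, hlc1, one_div_div]
  · rw [derivative_add_two_eq h₀ h₁ hΦ hparts, hr, hpt]
    simp only [hlc0, hlc1, div_div_eq_mul_div, mul_div_assoc]
  · rw [X_sq_sub_one_mul_derivative_add_X_mul_eq h₀ h₁ hΦ hparts, hp, hpt]
    simp only [hlc0, hlc1, mul_div_assoc]

theorem stmt10
    (ζ : ℝ) (hζ : 0 < ζ)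
    (P0 P1 : ℕ → Polynomial ℝ) (lc0 lc1 : ℕ → ℝ)
    (hdeg0 : ∀ n, (P0 n).natDegree = n)
    (hdeg1 : ∀ n, (P1 n).natDegree = n)
    (hlc0 : ∀ n, (P0 n).leadingCoeff = lc0 n)
    (hlc1 : ∀ n, (P1 n).leadingCoeff = lc1 n)
    (hlc0pos : ∀ n, 0 < lc0 n)
    (hlc1pos : ∀ n, 0 < lc1 n)
    (horth0 : ∀ m n, (∫ x in Set.Ioi (1 : ℝ),
        (P0 m).eval x * (P0 n).eval x * wgt 0 ζ x) = if m = n then (1 : ℝ) else 0)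
    (horth1 : ∀ m n, (∫ x in Set.Ioi (1 : ℝ),
        (P1 m).eval x * (P1 n).eval x * wgt 1 ζ x) = if m = n then (1 : ℝ) else 0)
    (p r pt : ℕ → ℝ)
    (hp : ∀ n, p n = lc0 n / lc1 n)
    (hr : ∀ n, r (n + 1) = lc1 n / lc0 (n + 2))
    (hpt : ∀ n, pt n = lc1 n / lc0 (n + 1)) :
    (derivative (P0 1) = C (1 / pt 0) * P1 0) ∧
    (∀ n, derivative (P0 (n + 2)) =
      C (((n : ℝ) + 2) / pt (n + 1)) * P1 (n + 1) + C (ζ * r (n + 1)) * P1 n) ∧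
    (∀ n, (X ^ 2 - 1) * derivative (P1 n) + X * P1 n =
      C (((n : ℝ) + 1) * pt n) * P0 (n + 1) + C (ζ * p n) * P0 n) :=
  stmt10_general ζ hζ P0 P1 lc0 lc1 hdeg0 hdeg1 hlc0 hlc1 horth0 horth1 p r pt hp hr hpt
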